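/- Let G (the graph denoted (K_4)_e) be the graph on vertices {1,2,3,4,5} with edge set {13, 14, 15, 23, 24, 25, 45}. Then: (a) for all real numbers λ₁ < λ₂, there exists A ∈ S(G) with the Strong Spectral Property whose spectrum is the multiset {λ₁, λ₁, λ₁, λ₂, λ₂} (ordered multiplicity list (3,2)); and (b) for all real numbers λ₁ < λ₂ < λ₃, there exists A ∈ S(G) with the Strong Spectral Property whose spectrum is the multiset {λ₁, λ₁, λ₁, λ₂, λ₃} (ordered multiplicity list (3,1,1)). -/

import Mathlib

open Matrix

/-- The geometric multiplicity of `lam` as an eigenvalue of `A`: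
`dim ker (A - lam • I)`. -/
noncomputable def multOf {m : Type*} [Fintype m] [DecidableEq m]
    (A : Matrix m m ℝ) (lam : ℝ) : ℕ :=
  Module.finrank ℝ (LinearMap.ker (A - lam • (1 : Matrix m m ℝ)).mulVecLin)

/-- The Strong Spectral Property. -/
def HasSSP {m : Type*} [Fintype m] [DecidableEq m] (A : Matrix m m ℝ) : Prop :=
  ∀ X : Matrix m m ℝ, X.IsSymm → Matrix.hadamard A X = 0 →
    Matrix.hadamard (1 : Matrix m m ℝ) X = 0 → A * X - X * A = 0 → X = 0

/-- `A ∈ S(G)`: `A` is symmetric and its off-diagonal nonzero pattern is given by `G`. -/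
def InS {m : Type*} [Fintype m] [DecidableEq m]
    (G : SimpleGraph m) (A : Matrix m m ℝ) : Prop :=
  A.IsSymm ∧ ∀ i j, i ≠ j → (A i j ≠ 0 ↔ G.Adj i j)


/-- The graph `(K₄)ₑ` on vertices `{0,1,2,3,4}` with edges
`{02, 03, 04, 12, 13, 14, 34}`. -/
def k4e : SimpleGraph (Fin 5) :=
  SimpleGraph.fromRel fun i j =>
    (i.val, j.val) ∈ [(0,2), (0,3), (0,4), (1,2), (1,3), (1,4), (3,4)]

/-!
With `u = (3, -4, 5, 0, 0)` and `v = (4a, 3a, 0, 3s, 4s)`, which are orthogonal, and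
`s ^ 2 = a (2b - a)`, the matrix `k4eMatrix l a b s` is `l • 1 + (a / 50) u uᵀ + (1 / (50 a)) v vᵀ`.
Hence it has eigenvalue `l + a` on `u`, `l + b` on `v` (as `‖v‖² = 50 a b`) and `l` on the
orthogonal complement of `u` and `v`; the columns of `k4eEigenbasis a s` are `u`, `v` and an
orthogonal basis of that complement. A symmetric `X` vanishing on the diagonal and on the edges
lives on the three non-edges `01, 23, 24`, and the entries `(0,3)`, `(1,3)`, `(0,4)` of `AX - XA`
already force it to vanish.
-/

section Multiplicity

variable {m : Type*} [Fintype m] [DecidableEq m]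

theorem multOf_add_rank (A : Matrix m m ℝ) (lam : ℝ) :
    multOf A lam + (A - lam • 1).rank = Fintype.card m := by
  rw [multOf, Matrix.rank, add_comm, LinearMap.finrank_range_add_finrank_ker,
    Module.finrank_fintype_fun_eq_card]

theorem multOf_eq_of_mul_eq_mul {A D P : Matrix m m ℝ} (hP : IsUnit P.det) (h : A * P = P * D)
    (lam : ℝ) : multOf A lam = multOf D lam := by
  have hshift : (A - lam • 1) * P = P * (D - lam • 1) := by
    rw [Matrix.sub_mul, Matrix.mul_sub, h, Matrix.smul_mul, Matrix.mul_smul, Matrix.one_mul,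
      Matrix.mul_one]
  have hrank : (A - lam • 1).rank = (D - lam • 1).rank := by
    rw [← rank_mul_eq_left_of_isUnit_det P _ hP, hshift, rank_mul_eq_right_of_isUnit_det P _ hP]
  have hA := multOf_add_rank A lam
  have hD := multOf_add_rank D lam
  omega

theorem multOf_diagonal (d : m → ℝ) (lam : ℝ) :
    multOf (diagonal d) lam = Fintype.card {i // d i = lam} := by
  have hrank : (diagonal d - lam • 1).rank = Fintype.card {i // ¬ d i = lam} := by
    rw [smul_one_eq_diagonal, diagonal_sub, rank_diagonal]
    simp only [ne_eq, sub_eq_zero]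
  have h := multOf_add_rank (diagonal d) lam
  rw [hrank, Fintype.card_subtype_compl] at h
  have := Fintype.card_subtype_le (fun i => d i = lam)
  omega

end Multiplicity

theorem eq_zero_of_hadamard_eq_zero {m : Type*} {A X : Matrix m m ℝ} (h : hadamard A X = 0)
    {i j : m} (hij : A i j ≠ 0) : X i j = 0 :=
  (mul_eq_zero.mp (congr_fun₂ h i j)).resolve_left hij

theorem InS.apply_eq_zero {m : Type*} [Fintype m] [DecidableEq m] {G : SimpleGraph m}
    {A X : Matrix m m ℝ} (hA : InS G A) (hAX : hadamard A X = 0) (hIX : hadamard 1 X = 0)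
    {i j : m} (hij : i = j ∨ G.Adj i j) : X i j = 0 := by
  rcases hij with rfl | hadj
  · exact eq_zero_of_hadamard_eq_zero hIX (by simp)
  · exact eq_zero_of_hadamard_eq_zero hAX ((hA.2 i j hadj.ne).mpr hadj)

noncomputable def k4eMatrix (l a b s : ℝ) : Matrix (Fin 5) (Fin 5) ℝ :=
  !![l + a/2, 0, 3*a/10, 6*s/25, 8*s/25;
     0, l + a/2, -(2*a/5), 9*s/50, 6*s/25;
     3*a/10, -(2*a/5), l + a/2, 0, 0;
     6*s/25, 9*s/50, 0, l + 9*(2*b-a)/50, 6*(2*b-a)/25;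
     8*s/25, 6*s/25, 0, 6*(2*b-a)/25, l + 8*(2*b-a)/25]

def k4eEigenbasis (a s : ℝ) : Matrix (Fin 5) (Fin 5) ℝ :=
  !![3, 4*a, 0, 4*s, 3;
     -4, 3*a, 0, 3*s, -4;
     5, 0, 0, 0, -5;
     0, 3*s, 4, -(3*a), 0;
     0, 4*s, -3, -(4*a), 0]

theorem k4eMatrix_mul_eigenbasis {a b s : ℝ} (ha : a ≠ 0) (hs : s ^ 2 = a * (2 * b - a)) (l : ℝ) :
    k4eMatrix l a b s * k4eEigenbasis a s =
      k4eEigenbasis a s * diagonal ![l + a, l + b, l, l, l] := by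
  obtain rfl : b = (s ^ 2 + a ^ 2) / (2 * a) := by field_simp; linear_combination -hs
  ext i j
  fin_cases i <;> fin_cases j <;>
    simp [k4eMatrix, k4eEigenbasis, mul_apply, Fin.sum_univ_five] <;> field_simp <;> ring

theorem k4eEigenbasis_transpose_mul_self (a s : ℝ) :
    (k4eEigenbasis a s)ᵀ * k4eEigenbasis a s =
      diagonal ![50, 25 * (a ^ 2 + s ^ 2), 25, 25 * (a ^ 2 + s ^ 2), 50] := by
  ext i j
  fin_cases i <;> fin_cases j <;>
    simp [k4eEigenbasis, mul_apply, Fin.sum_univ_five] <;> ring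

theorem isUnit_det_k4eEigenbasis {a : ℝ} (ha : a ≠ 0) (s : ℝ) :
    IsUnit (k4eEigenbasis a s).det := by
  have h := congr_arg det (k4eEigenbasis_transpose_mul_self a s)
  rw [det_mul, det_transpose, det_diagonal, Fin.prod_univ_five] at h
  have hnorm : a ^ 2 + s ^ 2 ≠ 0 := by positivity
  refine isUnit_iff_ne_zero.mpr fun h0 => ?_
  simp [h0, hnorm] at h

theorem k4eMatrix_inS {a b s : ℝ} (ha : a ≠ 0) (hs : s ≠ 0) (hab : 2 * b - a ≠ 0) (l : ℝ) :
    InS k4e (k4eMatrix l a b s) := by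
  refine ⟨?_, fun i j hij => ?_⟩
  · ext i j
    fin_cases i <;> fin_cases j <;> simp [k4eMatrix]
  · fin_cases i <;> fin_cases j <;> simp_all [k4eMatrix, k4e]

theorem k4e_nonedge_support {X : Matrix (Fin 5) (Fin 5) ℝ} (hX : X.IsSymm)
    (h : ∀ i j, i = j ∨ k4e.Adj i j → X i j = 0) :
    X = !![0, X 0 1, 0, 0, 0;
           X 0 1, 0, 0, 0, 0;
           0, 0, 0, X 2 3, X 2 4;
           0, 0, X 2 3, 0, 0;
           0, 0, X 2 4, 0, 0] := by
  ext i j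
  fin_cases i <;> fin_cases j <;> first
    | exact h _ _ (by simp [k4e]) | exact hX.apply _ _ | rfl

theorem k4eMatrix_hasSSP {a b s : ℝ} (ha : a ≠ 0) (hs : s ≠ 0) (hab : 2 * b - a ≠ 0) (l : ℝ) :
    HasSSP (k4eMatrix l a b s) := by
  intro X hX hAX hIX hcomm
  rw [k4e_nonedge_support hX fun i j hij => (k4eMatrix_inS ha hs hab l).apply_eq_zero hAX hIX hij]
    at hcomm ⊢
  have e03 : 3 * a / 10 * X 2 3 - X 0 1 * (9 * s / 50) = 0 := by
    simpa [k4eMatrix] using congr_fun₂ hcomm 0 3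
  have e13 : -(2 * a / 5 * X 2 3) - X 0 1 * (6 * s / 25) = 0 := by
    simpa [k4eMatrix] using congr_fun₂ hcomm 1 3
  have e04 : 3 * a / 10 * X 2 4 - X 0 1 * (6 * s / 25) = 0 := by
    simpa [k4eMatrix] using congr_fun₂ hcomm 0 4
  have hx : X 0 1 = 0 := by
    have : s * X 0 1 = 0 := by linear_combination (-25/9) * e03 - (25/12) * e13
    simpa [hs] using this
  have hy : X 2 3 = 0 := by
    have : a * X 2 3 = 0 := by linear_combination (10/3) * e03 + (3*s/5) * hx
    simpa [ha] using this
  have hz : X 2 4 = 0 := by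
    have : a * X 2 4 = 0 := by linear_combination (10/3) * e04 + (4*s/5) * hx
    simpa [ha] using this
  rw [hx, hy, hz]
  ext i j
  fin_cases i <;> fin_cases j <;> rfl

theorem exists_k4e_matrix {l μ ν : ℝ} (hlμ : l < μ) (hμν : μ ≤ ν) :
    ∃ A : Matrix (Fin 5) (Fin 5) ℝ, InS k4e A ∧ HasSSP A ∧
      ∀ t, multOf A t = multOf (diagonal ![μ, ν, l, l, l]) t := by
  set a := μ - l
  set b := ν - l
  have ha : 0 < a := sub_pos.mpr hlμ
  have hab : 0 < a * (2 * b - a) := mul_pos ha (by linarith)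
  set s := √(a * (2 * b - a))
  have hs : s ^ 2 = a * (2 * b - a) := Real.sq_sqrt hab.le
  have hs0 : s ≠ 0 := (Real.sqrt_pos.mpr hab).ne'
  have hD : ![μ, ν, l, l, l] = ![l + a, l + b, l, l, l] := by simp [a, b]
  refine ⟨k4eMatrix l a b s, k4eMatrix_inS ha.ne' hs0 (by linarith) l,
    k4eMatrix_hasSSP ha.ne' hs0 (by linarith) l, fun t => ?_⟩
  rw [hD]
  exact multOf_eq_of_mul_eq_mul (isUnit_det_k4eEigenbasis ha.ne' s)
    (k4eMatrix_mul_eigenbasis ha.ne' hs l) t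

/-- `(K₄)ₑ` realizes the ordered multiplicity lists `(3,2)` and `(3,1,1)`
spectrally arbitrarily with the SSP. -/
theorem k4e_oml32_and_oml311_spectrally_arbitrary_SSP :
    (∀ l1 l2 : ℝ, l1 < l2 →
      ∃ A : Matrix (Fin 5) (Fin 5) ℝ, InS k4e A ∧ HasSSP A ∧
        multOf A l1 = 3 ∧ multOf A l2 = 2 ∧
        ∀ t, t ≠ l1 → t ≠ l2 → multOf A t = 0) ∧
    (∀ l1 l2 l3 : ℝ, l1 < l2 → l2 < l3 →
      ∃ A : Matrix (Fin 5) (Fin 5) ℝ, InS k4e A ∧ HasSSP A ∧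
        multOf A l1 = 3 ∧ multOf A l2 = 1 ∧ multOf A l3 = 1 ∧
        ∀ t, t ≠ l1 → t ≠ l2 → t ≠ l3 → multOf A t = 0) := by
  have hcount (d : Fin 5 → ℝ) (t : ℝ) :
      multOf (diagonal d) t = ∑ i, if d i = t then 1 else 0 := by
    rw [multOf_diagonal, Fintype.card_subtype, Finset.card_filter]
  refine ⟨fun l1 l2 h12 => ?_, fun l1 l2 l3 h12 h23 => ?_⟩
  · obtain ⟨A, hS, hSSP, hA⟩ := exists_k4e_matrix h12 le_rfl
    refine ⟨A, hS, hSSP, ?_, ?_, fun t ht1 ht2 => ?_⟩ <;> simp only [hA, hcount, Fin.sum_univ_five]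
    · simp [h12.ne']
    · simp [h12.ne]
    · simp [ht1.symm, ht2.symm]
  · obtain ⟨A, hS, hSSP, hA⟩ := exists_k4e_matrix h12 h23.le
    refine ⟨A, hS, hSSP, ?_, ?_, ?_, fun t ht1 ht2 ht3 => ?_⟩ <;>
      simp only [hA, hcount, Fin.sum_univ_five]
    · simp [h12.ne', (h12.trans h23).ne']
    · simp [h12.ne, h23.ne']
    · simp [h23.ne, (h12.trans h23).ne]
    · simp [ht1.symm, ht2.symm, ht3.symm]
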